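/- arXiv:2503.06379 — 6 statements merged into one kernel-verified Lean document; each statement's English description precedes it below -/
import Mathlib

section
/- Let G be a finite group and p a prime, and suppose G is not a p-group. Then the Euler characteristic of the coset poset C_p(G) satisfies χ(C_p(G)) = -Σ_{H ∈ S_p(G) ∪ {1}} μ(H,G)·[G:H], where μ is the Möbius function of the finite poset S_p(G) ∪ {1, G} ordered by inclusion. -/
open scoped Classical in
/-- The Euler characteristic of (the order complex of) a finite poset `P`:
`χ(P) = Σ_{i ≥ 0} (-1)^i c_i` where `c_i` is the number of chains in `P` with
exactly `i + 1` elements; a chain with `i + 1` elements contributes `(-1)^i = (-1)^(card+1)`. -/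
noncomputable def posetEulerChar (P : Type*) [PartialOrder P] [Finite P] : ℤ :=
  letI := Fintype.ofFinite P
  ∑ s ∈ (Finset.univ : Finset P).powerset,
    if s.Nonempty ∧ IsChain (· ≤ ·) (s : Set P) then (-1 : ℤ) ^ (s.card + 1) else 0

/-- `μ` is the Möbius function of the poset `P`: `μ(x,x) = 1` and
`Σ_{x ≤ z ≤ y} μ(x,z) = 0` for all `x < y`. -/
def IsMobiusOf {P : Type*} [PartialOrder P] (μ : P → P → ℤ) : Prop :=
  (∀ x, μ x x = 1) ∧ ∀ x y : P, x < y → (∑ᶠ z ∈ Set.Icc x y, μ x z) = 0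

/-- The coset poset `C_p(G)`: all right cosets `Hx` (as subsets of `G`, ordered by
inclusion) where `H` ranges over the `p`-subgroups of `G` (including the trivial one). -/
def pCosets (p : ℕ) (G : Type*) [Group G] : Set (Set G) :=
  {S | ∃ (H : Subgroup G) (x : G), IsPGroup p H ∧ S = (fun h => h * x) '' (H : Set G)}

/-!
Group the chains of `C_p(G)` by their least element `Hx`. Right multiplication by `x` identifies
the cosets above `Hx` with the `p`-subgroups above `H`, so these chains contribute exactly what the
chains of `p`-subgroups starting at `H` contribute, and each `H` is the subgroup of `[G : H]`
cosets. By Philip Hall's theorem `μ(H, G)` is the alternating count of chains from `H` to `G`;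
as `G` is not a `p`-group, removing `G` from such a chain leaves a chain of `p`-subgroups starting
at `H`, which flips the sign.
-/

open Finset
open scoped Classical

theorem Finset.sum_sum_filter_of_existsUnique {ι κ M : Type*} [AddCommMonoid M] {A : Finset ι}
    {T : Finset κ} {R : ι → κ → Prop} (h : ∀ s ∈ A, ∃! y, y ∈ T ∧ R s y) (f : ι → M) :
    ∑ y ∈ T, ∑ s ∈ A with R s y, f s = ∑ s ∈ A, f s := by
  rw [sum_comm' (t' := A) (s' := fun s => T.filter (R s)) (by simp; tauto)]
  refine sum_congr rfl fun s hs => ?_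
  obtain ⟨y, hy, huniq⟩ := h s hs
  rw [show T.filter (R s) = {y} by ext z; simpa using ⟨huniq z, by rintro rfl; exact hy⟩]
  simp

theorem Finset.sum_neg_one_pow_card_add_one_eq_zero {α : Type*} {A : Finset (Finset α)} (a : α)
    (hA : ∀ s, a ∉ s → (insert a s ∈ A ↔ s ∈ A)) : ∑ s ∈ A, (-1 : ℤ) ^ (#s + 1) = 0 := by
  refine sum_involution (fun s _ => if a ∈ s then s.erase a else insert a s) ?_ ?_ ?_ ?_
  · intro s _
    split_ifs with ha
    · rw [← card_erase_add_one ha, pow_succ]; ring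
    · rw [card_insert_of_notMem ha]; ring
  · intro s _ _
    split_ifs with ha
    · exact fun h => notMem_erase a s (by rwa [h])
    · exact fun h => ha (h ▸ mem_insert_self a s)
  · intro s hs
    split_ifs with ha
    · exact (hA _ (notMem_erase a s)).1 (by rwa [insert_erase ha])
    · rwa [hA s ha]
  · intro s _
    by_cases ha : a ∈ s
    · simp [ha, insert_erase ha]
    · simp [ha, erase_insert ha]

section Chains

variable {P : Type*} [PartialOrder P]

theorem IsChain.exists_isLeast_of_finset {s : Finset P} (hs : IsChain (· ≤ ·) (s : Set P))
    (hne : s.Nonempty) : ∃ x, IsLeast (s : Set P) x :=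
  let ⟨x, hx⟩ := s.exists_minimal hne
  ⟨x, hx.1, fun _ hz => (hs.total hx.1 hz).elim id (hx.2 hz)⟩

theorem IsChain.exists_isGreatest_of_finset {s : Finset P} (hs : IsChain (· ≤ ·) (s : Set P))
    (hne : s.Nonempty) : ∃ x, IsGreatest (s : Set P) x :=
  let ⟨x, hx⟩ := s.exists_maximal hne
  ⟨x, hx.1, fun _ hz => (hs.total hz hx.1).elim id (hx.2 hz)⟩

variable [Fintype P]

noncomputable def chainsFrom (x : P) : Finset (Finset P) :=
  {s | IsChain (· ≤ ·) (s : Set P) ∧ IsLeast (s : Set P) x}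

lemma mem_chainsFrom {x : P} {s : Finset P} :
    s ∈ chainsFrom x ↔ IsChain (· ≤ ·) (s : Set P) ∧ IsLeast (s : Set P) x := by
  simp [chainsFrom]

theorem posetEulerChar_eq_sum_chainsFrom :
    posetEulerChar P = ∑ x : P, ∑ s ∈ chainsFrom x, (-1 : ℤ) ^ (#s + 1) := by
  have hχ : posetEulerChar P = ∑ s : Finset P,
      if s.Nonempty ∧ IsChain (· ≤ ·) (s : Set P) then (-1 : ℤ) ^ (#s + 1) else 0 := by
    simp only [posetEulerChar, powerset_univ]
    convert rfl
  have hleast : ∀ s ∈ ({s | s.Nonempty ∧ IsChain (· ≤ ·) (s : Set P)} : Finset (Finset P)),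
      ∃! x, x ∈ univ ∧ IsLeast (s : Set P) x := by
    intro s hs
    simp only [mem_filter, mem_univ, true_and] at hs
    obtain ⟨x, hx⟩ := hs.2.exists_isLeast_of_finset hs.1
    exact ⟨x, ⟨mem_univ x, hx⟩, fun y hy => hy.2.unique hx⟩
  rw [hχ, ← sum_filter, ← sum_sum_filter_of_existsUnique hleast]
  refine sum_congr rfl fun x _ => sum_congr ?_ fun _ _ => rfl
  ext s
  simp only [mem_filter, mem_univ, true_and, mem_chainsFrom]
  exact ⟨fun h => ⟨h.1.2, h.2⟩, fun h => ⟨⟨⟨x, h.2.1⟩, h.1⟩, h.2⟩⟩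

/-- Philip Hall's formula: `μ(x, y) = Σ (-1)^k` over the chains `x = x₀ < ⋯ < x_k = y`. -/
noncomputable def hallMu (x y : P) : ℤ :=
  ∑ s ∈ chainsFrom x with IsGreatest ((s : Finset P) : Set P) y, (-1) ^ (#s + 1)

lemma hallMu_self (x : P) : hallMu x x = 1 := by
  have hsingle : {s ∈ chainsFrom x | IsGreatest ((s : Finset P) : Set P) x} = {{x}} := by
    ext s
    simp only [mem_filter, mem_chainsFrom, mem_singleton]
    constructor
    · rintro ⟨⟨-, hl⟩, hg⟩
      exact eq_singleton_iff_unique_mem.2 ⟨hl.1, fun z hz => le_antisymm (hg.2 hz) (hl.2 hz)⟩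
    · rintro rfl
      simp [isLeast_singleton, isGreatest_singleton]
  simp [hallMu, hsingle]

lemma sum_chainsFrom_mem_upperBounds_eq_zero {x y : P} (hxy : x < y) :
    ∑ s ∈ chainsFrom x with y ∈ upperBounds ((s : Finset P) : Set P), (-1 : ℤ) ^ (#s + 1) = 0 := by
  refine sum_neg_one_pow_card_add_one_eq_zero y fun s _ => ?_
  simp only [mem_filter, mem_chainsFrom, coe_insert]
  constructor
  · rintro ⟨⟨hc, hl⟩, hub⟩
    exact ⟨⟨hc.mono (Set.subset_insert _ _), hl.1.resolve_left hxy.ne,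
      fun z hz => hl.2 (Set.mem_insert_of_mem _ hz)⟩, fun z hz => hub (Set.mem_insert_of_mem _ hz)⟩
  · rintro ⟨⟨hc, hl⟩, hub⟩
    refine ⟨⟨hc.insert fun b hb _ => Or.inr (hub hb), Set.mem_insert_of_mem _ hl.1, ?_⟩, ?_⟩
    · rintro z (rfl | hz)
      exacts [hxy.le, hl.2 hz]
    · rintro z (rfl | hz)
      exacts [le_rfl, hub hz]

lemma finsum_Icc_hallMu_eq_zero {x y : P} (hxy : x < y) : ∑ᶠ z ∈ Set.Icc x y, hallMu x z = 0 := by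
  have hIcc : Set.Icc x y = ↑({z | x ≤ z ∧ z ≤ y} : Finset P) := by ext; simp
  have htop : ∀ s ∈ {s ∈ chainsFrom x | y ∈ upperBounds ((s : Finset P) : Set P)},
      ∃! z, z ∈ ({z | x ≤ z ∧ z ≤ y} : Finset P) ∧ IsGreatest (s : Set P) z := by
    intro s hs
    simp only [mem_filter, mem_chainsFrom] at hs
    obtain ⟨⟨hc, hl⟩, hub⟩ := hs
    obtain ⟨z, hz⟩ := hc.exists_isGreatest_of_finset ⟨x, hl.1⟩
    exact ⟨z, ⟨by simpa using ⟨hl.2 hz.1, hub hz.1⟩, hz⟩, fun w hw => hw.2.unique hz⟩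
  rw [hIcc, finsum_mem_coe_finset, ← sum_chainsFrom_mem_upperBounds_eq_zero hxy,
    ← sum_sum_filter_of_existsUnique htop]
  refine sum_congr rfl fun z hz => ?_
  rw [hallMu, filter_filter]
  refine sum_congr (filter_congr fun s _ => ?_) fun _ _ => rfl
  exact ⟨fun h => ⟨fun w hw => (h.2 hw).trans (mem_filter.1 hz).2.2, h⟩, And.right⟩

theorem isMobiusOf_hallMu : IsMobiusOf (hallMu : P → P → ℤ) :=
  ⟨hallMu_self, fun _ _ => finsum_Icc_hallMu_eq_zero⟩

theorem IsMobiusOf.eq_of_le {μ ν : P → P → ℤ} (hμ : IsMobiusOf μ) (hν : IsMobiusOf ν) {x y : P}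
    (hxy : x ≤ y) : μ x y = ν x y := by
  induction y using WellFoundedLT.induction with
  | _ y ih =>
    rcases hxy.eq_or_lt with rfl | hlt
    · rw [hμ.1, hν.1]
    have hsplit (f : P → ℤ) : ∑ᶠ z ∈ Set.Icc x y, f z = f y + ∑ᶠ z ∈ Set.Ico x y, f z := by
      rw [← Set.Ico_insert_right hxy, finsum_mem_insert _ Set.right_notMem_Ico (Set.toFinite _)]
    have hμy := hμ.2 x y hlt
    have hνy := hν.2 x y hlt
    rw [hsplit] at hμy hνy
    rw [finsum_mem_congr rfl fun z hz => ih z hz.2 hz.1] at hμy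
    linarith

lemma hallMu_eq_neg_sum_of_isTop {x t : P} (ht : IsTop t) (hxt : x ≠ t) :
    hallMu x t = -∑ s ∈ chainsFrom x with t ∉ s, (-1 : ℤ) ^ (#s + 1) := by
  have hub : ∀ s : Finset P, t ∈ upperBounds (s : Set P) := fun _ z _ => ht z
  have h0 := sum_chainsFrom_mem_upperBounds_eq_zero ((ht x).lt_of_ne hxt)
  simp only [hub, filter_true] at h0
  rw [← sum_filter_add_sum_filter_not _ (t ∈ ·)] at h0
  rw [eq_neg_iff_add_eq_zero, ← h0, hallMu]
  congr 2
  exact filter_congr fun s _ => ⟨fun h => h.1, fun h => ⟨h, hub s⟩⟩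

variable {Q : Type*} [PartialOrder Q] [Fintype Q]

lemma map_chainsFrom (e : Q ↪o P) (a : Q) :
    (chainsFrom a).map (mapEmbedding e.toEmbedding).toEmbedding =
      {s ∈ chainsFrom (e a) | ((s : Finset P) : Set P) ⊆ Set.range e} := by
  have hmap : ∀ t : Finset Q, t.map e.toEmbedding ∈ chainsFrom (e a) ↔ t ∈ chainsFrom a := by
    intro t
    simp only [mem_chainsFrom, coe_map, RelEmbedding.coe_toEmbedding, IsChain.image_embedding_iff]
    refine and_congr_right fun _ => ⟨fun h => ⟨e.injective.mem_set_image.1 h.1,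
      fun z hz => e.le_iff_le.1 (h.2 (Set.mem_image_of_mem e hz))⟩,
      fun h => ⟨Set.mem_image_of_mem e h.1, Set.forall_mem_image.2 fun z hz => e.le_iff_le.2 (h.2 hz)⟩⟩
  ext s
  simp only [mem_map, mem_filter, RelEmbedding.coe_toEmbedding, mapEmbedding_apply]
  constructor
  · rintro ⟨t, ht, rfl⟩
    exact ⟨(hmap t).2 ht, by simp⟩
  · rintro ⟨hs, hsub⟩
    obtain ⟨t, rfl⟩ : ∃ t : Finset Q, t.map e.toEmbedding = s := by
      simp_rw [map_eq_image, ← subset_univ_image_iff]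
      intro z hz
      obtain ⟨q, rfl⟩ := hsub hz
      exact mem_image_of_mem _ (mem_univ q)
    exact ⟨t, (hmap t).1 hs, rfl⟩

lemma sum_chainsFrom_filter_subset_range (e : Q ↪o P) (a : Q) :
    ∑ s ∈ chainsFrom (e a) with ((s : Finset P) : Set P) ⊆ Set.range e, (-1 : ℤ) ^ (#s + 1) =
      ∑ t ∈ chainsFrom a, (-1 : ℤ) ^ (#t + 1) := by
  rw [← map_chainsFrom, sum_map]
  simp

lemma sum_chainsFrom_of_Ici_subset_range (e : Q ↪o P) {a : Q} (h : Set.Ici (e a) ⊆ Set.range e) :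
    ∑ s ∈ chainsFrom (e a), (-1 : ℤ) ^ (#s + 1) = ∑ t ∈ chainsFrom a, (-1 : ℤ) ^ (#t + 1) := by
  rw [← sum_chainsFrom_filter_subset_range e, filter_true_of_mem]
  exact fun s hs z hz => h ((mem_chainsFrom.1 hs).2.2 hz)

end Chains

section Cosets

variable {G : Type*} [Group G] {p : ℕ}

abbrev PSubgroups (p : ℕ) (G : Type*) [Group G] := {K : Subgroup G // IsPGroup p K}

lemma Subgroup.le_of_image_mul_right_subset {H K : Subgroup G} {x y : G}
    (h : (· * x) '' (H : Set G) ⊆ (· * y) '' (K : Set G)) : H ≤ K := by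
  have hmem : ∀ g ∈ H, g * x * y⁻¹ ∈ K := fun g hg => by
    obtain ⟨k, hk, hkg⟩ := h ⟨g, hg, rfl⟩
    simpa [← hkg] using hk
  intro g hg
  simpa [mul_assoc] using K.mul_mem (hmem g hg) (K.inv_mem (hmem 1 H.one_mem))

def rightCosetEmbedding (x : G) : PSubgroups p G ↪o pCosets p G :=
  OrderEmbedding.ofMapLEIff (fun K => ⟨(· * x) '' (K.1 : Set G), K.1, x, K.2, rfl⟩) fun _ _ =>
    ⟨Subgroup.le_of_image_mul_right_subset, fun h => Set.image_mono h⟩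

lemma mem_rightCosetEmbedding {x y : G} {K : PSubgroups p G} :
    y ∈ (rightCosetEmbedding x K : Set G) ↔ y * x⁻¹ ∈ K.1 :=
  mem_rightCoset_iff x

lemma rightCosetEmbedding_eq_iff {x y : G} {K : PSubgroups p G} :
    rightCosetEmbedding x K = rightCosetEmbedding y K ↔ y * x⁻¹ ∈ K.1 :=
  Subtype.ext_iff.trans (rightCoset_eq_iff _)

lemma exists_rightCosetEmbedding_eq (C : pCosets p G) :
    ∃ K : PSubgroups p G, ∃ x, rightCosetEmbedding x K = C :=
  let ⟨H, x, hH, hC⟩ := C.2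
  ⟨⟨H, hH⟩, x, Subtype.ext hC.symm⟩

noncomputable def cosetSubgroup (C : pCosets p G) : PSubgroups p G :=
  (exists_rightCosetEmbedding_eq C).choose

lemma rightCosetEmbedding_cosetSubgroup {C : pCosets p G} {x : G} (hx : x ∈ (C : Set G)) :
    rightCosetEmbedding x (cosetSubgroup C) = C := by
  obtain ⟨y, hy⟩ : ∃ y, rightCosetEmbedding y (cosetSubgroup C) = C :=
    (exists_rightCosetEmbedding_eq C).choose_spec
  rw [← hy] at hx
  have hxy : x * y⁻¹ ∈ (cosetSubgroup C).1 := mem_rightCosetEmbedding.1 hx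
  exact (rightCosetEmbedding_eq_iff.2 (by simpa using (cosetSubgroup C).1.inv_mem hxy)).trans hy

lemma cosetSubgroup_rightCosetEmbedding (x : G) (K : PSubgroups p G) :
    cosetSubgroup (rightCosetEmbedding x K) = K := by
  have hself : x ∈ (rightCosetEmbedding x K : Set G) := by simp [mem_rightCosetEmbedding]
  have h := rightCosetEmbedding_cosetSubgroup hself
  exact (rightCosetEmbedding x).injective h

lemma exists_mem_pCosets (C : pCosets p G) : ∃ x, x ∈ (C : Set G) :=
  let ⟨_, x, hC⟩ := exists_rightCosetEmbedding_eq C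
  ⟨x, hC ▸ mem_rightCosetEmbedding.2 (by simp)⟩

lemma Ici_subset_range_rightCosetEmbedding {C : pCosets p G} {x : G} (hx : x ∈ (C : Set G)) :
    Set.Ici C ⊆ Set.range (rightCosetEmbedding x) :=
  fun D hD => ⟨cosetSubgroup D, rightCosetEmbedding_cosetSubgroup (hD hx)⟩

lemma card_cosetSubgroup_eq_index (K : PSubgroups p G) :
    Nat.card {C : pCosets p G // cosetSubgroup C = K} = K.1.index := by
  rw [Subgroup.index, ← Nat.card_congr (QuotientGroup.quotientRightRelEquivQuotientLeftRel K.1)]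
  refine (Nat.card_congr (Equiv.ofBijective
    (Quotient.lift (fun x => ⟨rightCosetEmbedding x K, cosetSubgroup_rightCosetEmbedding x K⟩)
      fun _ _ h => Subtype.ext (rightCosetEmbedding_eq_iff.2 (QuotientGroup.rightRel_apply.1 h)))
    ⟨?_, ?_⟩)).symm
  · rintro ⟨x⟩ ⟨y⟩ h
    exact Quotient.sound (QuotientGroup.rightRel_apply.2
      (rightCosetEmbedding_eq_iff.1 (congrArg Subtype.val h)))
  · rintro ⟨C, rfl⟩
    obtain ⟨x, hx⟩ := exists_mem_pCosets C
    exact ⟨⟦x⟧, Subtype.ext (rightCosetEmbedding_cosetSubgroup hx)⟩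

variable [Fintype G]

lemma sum_chainsFrom_pCosets (C : pCosets p G) :
    ∑ s ∈ chainsFrom C, (-1 : ℤ) ^ (#s + 1) =
      ∑ t ∈ chainsFrom (cosetSubgroup C), (-1 : ℤ) ^ (#t + 1) := by
  obtain ⟨x, hx⟩ := exists_mem_pCosets C
  have h := sum_chainsFrom_of_Ici_subset_range (rightCosetEmbedding x) (a := cosetSubgroup C)
    (by rw [rightCosetEmbedding_cosetSubgroup hx]; exact Ici_subset_range_rightCosetEmbedding hx)
  rwa [rightCosetEmbedding_cosetSubgroup hx] at h

theorem posetEulerChar_pCosets :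
    posetEulerChar (pCosets p G) =
      ∑ K : PSubgroups p G, (K.1.index : ℤ) * ∑ t ∈ chainsFrom K, (-1 : ℤ) ^ (#t + 1) := by
  rw [posetEulerChar_eq_sum_chainsFrom]
  simp_rw [sum_chainsFrom_pCosets]
  rw [← sum_fiberwise univ cosetSubgroup]
  refine sum_congr rfl fun K _ => ?_
  rw [sum_congr rfl fun C hC => by rw [(mem_filter.1 hC).2], sum_const, ← card_cosetSubgroup_eq_index,
    Nat.card_eq_fintype_card, Fintype.card_subtype, nsmul_eq_mul]

end Cosets

theorem euler_char_pCosets_eq_neg_sum_mobius_general {G : Type*} [Group G] [Fintype G] {p : ℕ}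
    (hG : ¬ IsPGroup p G)
    (μ : {H : Subgroup G // IsPGroup p H ∨ H = ⊤} →
         {H : Subgroup G // IsPGroup p H ∨ H = ⊤} → ℤ)
    (hμ : IsMobiusOf μ) :
    posetEulerChar ↥(pCosets p G) =
      -∑ᶠ (H : {H : Subgroup G // IsPGroup p H ∨ H = ⊤}) (_ : IsPGroup p H.val),
        μ H ⟨⊤, Or.inr rfl⟩ * (H.val.index : ℤ) := by
  set top : {H : Subgroup G // IsPGroup p H ∨ H = ⊤} := ⟨⊤, Or.inr rfl⟩
  let ι : PSubgroups p G ↪o {H : Subgroup G // IsPGroup p H ∨ H = ⊤} :=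
    Subtype.orderEmbedding fun _ => Or.inl
  have htop : IsTop top := fun H => show H.1 ≤ ⊤ from le_top
  have hrange : Set.range ι = {top}ᶜ := by
    ext H
    refine ⟨?_, fun hH => ⟨⟨H.1, H.2.resolve_right fun h => hH (Subtype.ext h)⟩, rfl⟩⟩
    rintro ⟨K, rfl⟩ hK
    exact hG ((congrArg Subtype.val hK ▸ K.2).of_equiv Subgroup.topEquiv)
  have hμι : ∀ K, μ (ι K) top = -∑ t ∈ chainsFrom K, (-1 : ℤ) ^ (#t + 1) := fun K => by
    rw [hμ.eq_of_le isMobiusOf_hallMu (htop _),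
      hallMu_eq_neg_sum_of_isTop htop fun h => hrange.subset ⟨K, rfl⟩ h,
      ← sum_chainsFrom_filter_subset_range ι K, hrange]
    simp_rw [Set.subset_compl_singleton_iff, mem_coe]
    congr!
  rw [posetEulerChar_pCosets, ← finsum_subtype_eq_finsum_cond,
    ← finsum_comp_equiv (Equiv.subtypeSubtypeEquivSubtype Or.inl).symm, finsum_eq_sum_of_fintype,
    ← sum_neg_distrib]
  refine sum_congr rfl fun K _ => ?_
  change _ = -(μ (ι K) top * (K.1.index : ℤ))
  rw [hμι]
  ring

/-- If the finite group `G` is not a `p`-group, then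
`χ(C_p(G)) = -Σ_{H ∈ S_p(G) ∪ {1}} μ(H,G)·[G:H]`, where `μ` is the Möbius function of the
poset `S_p(G) ∪ {1, G}` of all `p`-subgroups of `G` together with `G`, ordered by inclusion. -/
theorem euler_char_pCosets_eq_neg_sum_mobius {G : Type*} [Group G] [Fintype G] {p : ℕ}
    (hp : p.Prime) (hG : ¬ IsPGroup p G)
    (μ : {H : Subgroup G // IsPGroup p H ∨ H = ⊤} →
         {H : Subgroup G // IsPGroup p H ∨ H = ⊤} → ℤ)
    (hμ : IsMobiusOf μ) :
    posetEulerChar ↥(pCosets p G) =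
      -∑ᶠ (H : {H : Subgroup G // IsPGroup p H ∨ H = ⊤}) (_ : IsPGroup p H.val),
        μ H ⟨⊤, Or.inr rfl⟩ * (H.val.index : ℤ) :=
  euler_char_pCosets_eq_neg_sum_mobius_general hG μ hμ
end

section
/- Let G be a finite group and p a prime. Then χ(C_p(G)) = 1 if and only if G is a p-group. -/
/-!
If `G` is a `p`-group, then `G` itself is the greatest element of `C_p(G)`, so the order complex
is a cone: adding or removing the top element pairs off all chains except `∅` and `{G}`.

Otherwise choose a prime `q ≠ p` dividing `|G|` and a Sylow `q`-subgroup `Q ≠ 1`. Left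
multiplication `g • Hx = (gHg⁻¹)(gx)` is an order-preserving action of `Q` on `C_p(G)` without
fixed points, because `gHx = Hx` forces `g ∈ H`, and `H ∩ Q = 1`. No nonempty chain is fixed
either, since its maximum would be, so every orbit of nonempty chains has size a positive power
of `q`, and `q ∣ χ(C_p(G))`.
-/

open scoped Pointwise
open MulAction

theorem IsPGroup.dvd_sum_of_forall_fixedPoints_eq_zero {p : ℕ} [Fact p.Prime] {Q : Type*}
    [Group Q] (hQ : IsPGroup p Q) {α : Type*} [Fintype α] [MulAction Q α] (f : α → ℤ)
    (hf : ∀ (g : Q) (a : α), f (g • a) = f a) (hfix : ∀ a ∈ fixedPoints Q α, f a = 0) :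
    (p : ℤ) ∣ ∑ a, f a := by
  classical
  rw [Fintype.sum_equiv (selfEquivSigmaOrbits Q α) f (fun x => f x.2) fun _ => rfl,
    Fintype.sum_sigma]
  refine Finset.dvd_sum fun ω _ => ?_
  have horbit : ∀ b : orbit Q ω.out, f b = f ω.out := by
    rintro ⟨_, g, rfl⟩
    exact hf g _
  rw [Fintype.sum_congr _ _ horbit, Finset.sum_const, Finset.card_univ, nsmul_eq_mul]
  obtain ⟨n, hn⟩ := hQ.card_orbit ω.out
  rw [Nat.card_eq_fintype_card] at hn
  rcases n with _ | n
  · rw [hfix _ (mem_fixedPoints_iff_card_orbit_eq_one.mpr hn), mul_zero]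
    exact dvd_zero _
  · rw [hn]
    exact Dvd.dvd.mul_right (by exact_mod_cast dvd_pow_self p n.succ_ne_zero) _

theorem exists_prime_ne_dvd_card_of_not_isPGroup {G : Type*} [Group G] [Finite G] {p : ℕ}
    (hG : ¬IsPGroup p G) : ∃ q, q.Prime ∧ q ≠ p ∧ q ∣ Nat.card G := by
  by_contra! h
  exact hG (IsPGroup.of_card (Nat.eq_prime_pow_of_unique_prime_dvd Nat.card_pos.ne'
    fun hq hqG => by_contra fun hqp => h _ hq hqp hqG))

section ChainWeight

variable {P : Type*} [PartialOrder P]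

open scoped Classical in
noncomputable def chainWeight (s : Finset P) : ℤ :=
  if s.Nonempty ∧ IsChain (· ≤ ·) (s : Set P) then (-1) ^ (s.card + 1) else 0

theorem posetEulerChar_eq_sum_chainWeight [Fintype P] :
    posetEulerChar P = ∑ s : Finset P, chainWeight s := by
  rw [posetEulerChar, ← Finset.powerset_univ]
  congr!

theorem chainWeight_add_chainWeight_insert_of_isTop [DecidableEq P] {T : P} (hT : IsTop T)
    {s : Finset P} (hs : T ∉ s) :
    chainWeight s + chainWeight (insert T s) = if s = ∅ then 1 else 0 := by
  have hchain : IsChain (· ≤ ·) (insert T (s : Set P)) ↔ IsChain (· ≤ ·) (s : Set P) :=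
    ⟨fun h => h.mono (Set.subset_insert _ _), fun h => h.insert fun x _ _ => Or.inr (hT x)⟩
  rcases s.eq_empty_or_nonempty with rfl | hne
  · simp [chainWeight]
  · rw [chainWeight, chainWeight, Finset.coe_insert, hchain, if_neg hne.ne_empty]
    by_cases hc : IsChain (· ≤ ·) (s : Set P)
    · rw [if_pos ⟨hne, hc⟩, if_pos ⟨Finset.insert_nonempty T s, hc⟩,
        Finset.card_insert_of_notMem hs, pow_succ]
      ring
    · rw [if_neg fun h => hc h.2, if_neg fun h => hc h.2, add_zero]

theorem posetEulerChar_eq_one_of_isTop [Finite P] {T : P} (hT : IsTop T) :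
    posetEulerChar P = 1 := by
  classical
  have := Fintype.ofFinite P
  rw [posetEulerChar_eq_sum_chainWeight, ← Finset.powerset_univ,
    ← Finset.insert_erase (Finset.mem_univ T),
    Finset.sum_powerset_insert (Finset.notMem_erase T _), ← Finset.sum_add_distrib,
    Finset.sum_congr rfl fun s hs => chainWeight_add_chainWeight_insert_of_isTop hT
      fun hT => Finset.notMem_erase T _ (Finset.mem_powerset.mp hs hT)]
  simp

end ChainWeight

section MonotoneAction

variable {Q P : Type*} [Group Q] [PartialOrder P] [MulAction Q P]

theorem IsChain.smul_of_monotone (hmono : ∀ g : Q, Monotone (g • · : P → P)) (g : Q)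
    {s : Set P} (hs : IsChain (· ≤ ·) s) : IsChain (· ≤ ·) (g • s) := by
  rw [← Set.image_smul]
  exact hs.image_of_map_rel _ _ _ fun _ _ h => hmono g h

theorem chainWeight_smul [DecidableEq P] (hmono : ∀ g : Q, Monotone (g • · : P → P)) (g : Q)
    (s : Finset P) : chainWeight (g • s) = chainWeight s := by
  have hchain : IsChain (· ≤ ·) (g • (s : Set P)) ↔ IsChain (· ≤ ·) (s : Set P) :=
    ⟨fun h => by simpa using h.smul_of_monotone hmono g⁻¹, IsChain.smul_of_monotone hmono g⟩
  unfold chainWeight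
  congr 1
  · rw [Finset.coe_smul_finset, hchain, Finset.smul_finset_nonempty]
  · rw [Finset.card_smul_finset]

theorem exists_forall_smul_eq_of_isChain [DecidableEq P]
    (hmono : ∀ g : Q, Monotone (g • · : P → P)) {s : Finset P} (hne : s.Nonempty)
    (hs : IsChain (· ≤ ·) (s : Set P)) (hstable : ∀ g : Q, g • s = s) :
    ∃ x ∈ s, ∀ g : Q, g • x = x := by
  obtain ⟨M, hM⟩ := s.exists_maximal hne
  have hle : ∀ g : Q, g • M ≤ M := fun g => by
    have hgM : g • M ∈ s := hstable g ▸ Finset.smul_mem_smul_finset hM.prop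
    exact (hs.total hgM hM.prop).elim id (hM.le_of_ge hgM)
  exact ⟨M, hM.prop, fun g => le_antisymm (hle g) (by simpa using hmono g (hle g⁻¹))⟩

theorem IsPGroup.dvd_posetEulerChar {p : ℕ} [Fact p.Prime] (hQ : IsPGroup p Q) [Finite P]
    (hmono : ∀ g : Q, Monotone (g • · : P → P)) (hfix : fixedPoints Q P = ∅) :
    (p : ℤ) ∣ posetEulerChar P := by
  classical
  have := Fintype.ofFinite P
  rw [posetEulerChar_eq_sum_chainWeight]
  refine hQ.dvd_sum_of_forall_fixedPoints_eq_zero _ (chainWeight_smul hmono) fun s hs => ?_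
  rw [chainWeight, if_neg]
  rintro ⟨hne, hchain⟩
  obtain ⟨x, -, hx⟩ := exists_forall_smul_eq_of_isChain hmono hne hchain hs
  exact Set.eq_empty_iff_forall_notMem.mp hfix x hx

end MonotoneAction

section CosetPoset

variable {G : Type*} [Group G] {p : ℕ}

theorem smul_mem_pCosets (g : G) {S : Set G} (hS : S ∈ pCosets p G) : g • S ∈ pCosets p G := by
  obtain ⟨H, x, hH, rfl⟩ := hS
  refine ⟨H.map (MulAut.conj g).toMonoidHom, g * x, hH.map _, ?_⟩
  rw [← Set.image_smul, Set.image_image, Subgroup.coe_map, Set.image_image]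
  refine Set.image_congr fun h _ => ?_
  simp [mul_assoc]

instance : MulAction G (pCosets p G) where
  smul g C := ⟨g • C.1, smul_mem_pCosets g C.2⟩
  one_smul C := Subtype.ext (one_smul G C.1)
  mul_smul g h C := Subtype.ext (mul_smul g h C.1)

theorem monotone_smul_pCosets (g : G) : Monotone (g • · : pCosets p G → pCosets p G) :=
  fun _ _ h => Set.smul_set_mono h

theorem univ_mem_pCosets (hG : IsPGroup p G) : Set.univ ∈ pCosets p G :=
  ⟨⊤, 1, hG.to_subgroup ⊤, by simp⟩

theorem fixedPoints_pCosets_eq_empty [Fact p.Prime] {q : ℕ} [Fact q.Prime] (hqp : q ≠ p)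
    {Q : Subgroup G} (hQ : IsPGroup q Q) (hQ_ne_bot : Q ≠ ⊥) :
    fixedPoints Q (pCosets p G) = ∅ := by
  refine Set.eq_empty_of_forall_notMem fun C hC => hQ_ne_bot ?_
  obtain ⟨H, x, hH, hCx⟩ := C.2
  have hle : Q ≤ H := fun g hg => by
    have hgx : g * x ∈ g • (C : Set G) := Set.smul_mem_smul_set (hCx ▸ ⟨1, H.one_mem, one_mul x⟩)
    rw [show g • (C : Set G) = C from congrArg Subtype.val (hC ⟨g, hg⟩), hCx] at hgx
    obtain ⟨h, hh, hhx⟩ := hgx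
    rwa [mul_right_cancel hhx] at hh
  exact (IsPGroup.disjoint_of_ne q p hqp Q H hQ hH).eq_bot_of_le hle

end CosetPoset

/-- `χ(C_p(G)) = 1` if and only if `G` is a `p`-group. -/
theorem euler_char_pCosets_eq_one_iff {G : Type*} [Group G] [Fintype G] {p : ℕ}
    (hp : p.Prime) :
    posetEulerChar ↥(pCosets p G) = 1 ↔ IsPGroup p G := by
  have := Fact.mk hp
  refine ⟨fun hχ => ?_, fun hG =>
    posetEulerChar_eq_one_of_isTop (T := ⟨_, univ_mem_pCosets hG⟩) fun C => Set.subset_univ C.1⟩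
  by_contra hG
  obtain ⟨q, hq, hqp, hqG⟩ := exists_prime_ne_dvd_card_of_not_isPGroup hG
  have := Fact.mk hq
  let Q : Sylow q G := default
  have hdvd := Q.isPGroup'.dvd_posetEulerChar (fun g => monotone_smul_pCosets (g : G))
    (fixedPoints_pCosets_eq_empty hqp Q.isPGroup' (Q.ne_bot_of_dvd_card hqG))
  rw [hχ] at hdvd
  exact hq.one_lt.ne' (Nat.dvd_one.mp (Int.natCast_dvd_natCast.mp hdvd))
end

section
/- Let G be a finite group and p a prime. If G is p-closed, then χ(C_p(G)) = |G|_{p'}. -/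
/-!
If `P` is a normal Sylow `p`-subgroup, every `p`-subgroup lies in `P`, so every `p`-coset `Hx`
lies in the unique `P`-coset `Px = P * Hx`, and comparable cosets lie in the same one.
Hence `C_p(G)` is a disjoint union of `|G : P| = |G|_{p'}` components, each of which has a
greatest element `Px` and so is a cone of Euler characteristic `1`.
-/

open Finset

section EulerChar

variable {P : Type*} [PartialOrder P]

open scoped Classical in
noncomputable def eulerCharOn (A : Finset P) : ℤ :=
  ∑ s ∈ A.powerset.filter fun s : Finset P => s.Nonempty ∧ IsChain (· ≤ ·) (s : Set P),
    (-1 : ℤ) ^ (#s + 1)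

theorem posetEulerChar_eq_eulerCharOn_univ [Fintype P] :
    posetEulerChar P = eulerCharOn (univ : Finset P) := by
  rw [posetEulerChar, eulerCharOn, sum_filter]
  convert rfl

/- Toggling `m` pairs each chain `t` of `A.erase m` with the chain `insert m t`; the pairs
cancel, except that `∅` is not counted while `{m}` is. -/
theorem eulerCharOn_eq_one_of_isGreatest {A : Finset P} {m : P} (hm : IsGreatest (A : Set P) m) :
    eulerCharOn A = 1 := by
  classical
  have hA : insert m (A.erase m) = A := insert_erase hm.1
  rw [eulerCharOn, sum_filter, ← hA, sum_powerset_insert (notMem_erase m A), ← sum_add_distrib,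
    sum_eq_single ∅]
  · simp
  · intro t ht hne
    rw [mem_powerset] at ht
    have hmt : m ∉ t := fun h => notMem_erase m A (ht h)
    have hchain :
        IsChain (· ≤ ·) ((insert m t : Finset P) : Set P) ↔ IsChain (· ≤ ·) (t : Set P) := by
      rw [coe_insert]
      refine ⟨fun h => h.mono (Set.subset_insert _ _), fun h => h.insert fun b hb _ => ?_⟩
      exact Or.inr (hm.2 (mem_of_mem_erase (ht hb)))
    rw [card_insert_of_notMem hmt, hchain]
    split_ifs <;> simp_all [pow_succ]
  · simp

theorem eulerCharOn_univ_eq_sum_fibers [Fintype P] [DecidableEq P] (f : P → P)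
    (le_f : ∀ x, x ≤ f x) (eq_of_le : ∀ x y, x ≤ y → f x = f y) :
    eulerCharOn (univ : Finset P) =
      ∑ m ∈ univ with f m = m, eulerCharOn (univ.filter (f · = m)) := by
  have fiber_of_chain {s : Finset P} (hchain : IsChain (· ≤ ·) (s : Set P)) {x : P}
      (hx : x ∈ s) : s ⊆ univ.filter (f · = f x) := fun y hy => by
    rw [mem_filter]
    refine ⟨mem_univ y, ?_⟩
    rcases hchain.total hy hx with h | h
    · exact eq_of_le y x h
    · exact (eq_of_le x y h).symm
  unfold eulerCharOn
  rw [← sum_biUnion]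
  · congr 1
    ext s
    simp only [mem_biUnion, mem_filter, mem_powerset, mem_univ, true_and]
    constructor
    · rintro ⟨-, ⟨x, hx⟩, hchain⟩
      exact ⟨f x, (eq_of_le x (f x) (le_f x)).symm, fiber_of_chain hchain hx, ⟨x, hx⟩, hchain⟩
    · rintro ⟨m, -, -, hs⟩
      exact ⟨subset_univ s, hs⟩
  · intro m _ m' _ hne
    refine disjoint_left.2 fun s hm hm' => hne ?_
    simp only [mem_filter, mem_powerset] at hm hm'
    obtain ⟨x, hx⟩ := hm.2.1
    exact ((mem_filter.1 (hm.1 hx)).2).symm.trans (mem_filter.1 (hm'.1 hx)).2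

theorem posetEulerChar_eq_card_fixedPoints [Finite P] (f : P → P)
    (le_f : ∀ x, x ≤ f x) (eq_of_le : ∀ x y, x ≤ y → f x = f y) :
    posetEulerChar P = Nat.card (Function.fixedPoints f) := by
  classical
  have := Fintype.ofFinite P
  have fiber_isGreatest (m : P) (hm : f m = m) :
      IsGreatest (univ.filter (f · = m) : Set P) m :=
    ⟨by simpa using hm, fun x hx => (mem_filter.1 hx).2 ▸ le_f x⟩
  rw [posetEulerChar_eq_eulerCharOn_univ, eulerCharOn_univ_eq_sum_fibers f le_f eq_of_le,
    sum_congr rfl fun m hm => eulerCharOn_eq_one_of_isGreatest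
      (fiber_isGreatest m (mem_filter.1 hm).2), sum_const, nsmul_one, Nat.card_eq_fintype_card,
    Fintype.card_subtype]
  rfl

end EulerChar

section CosetHull

open scoped Pointwise

variable {G : Type*} [Group G]

theorem mem_image_mul_right_iff {K : Subgroup G} {x z : G} :
    z ∈ (· * x) '' (K : Set G) ↔ z * x⁻¹ ∈ K := by
  rw [Set.image_mul_right]
  rfl

theorem image_mul_right_eq_of_mem {K : Subgroup G} {x y : G}
    (hy : y ∈ (· * x) '' (K : Set G)) : (· * y) '' (K : Set G) = (· * x) '' K := by
  ext z
  rw [mem_image_mul_right_iff] at hy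
  rw [mem_image_mul_right_iff, mem_image_mul_right_iff, ← K.mul_mem_cancel_right hy,
    mul_assoc, inv_mul_cancel_left]

theorem mul_image_mul_right_of_le {H K : Subgroup G} (hHK : H ≤ K) (x : G) :
    (K : Set G) * ((· * x) '' (H : Set G)) = (· * x) '' K := by
  ext z
  simp only [Set.mem_mul, mem_image_mul_right_iff]
  constructor
  · rintro ⟨a, ha, b, hb, rfl⟩
    rw [mul_assoc]
    exact K.mul_mem ha (hHK hb)
  · exact fun hz => ⟨z * x⁻¹, hz, x, by simp [H.one_mem], inv_mul_cancel_right z x⟩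

variable {p : ℕ} {P : Subgroup G}

theorem mul_mem_pCosets (hP : IsPGroup p P) (le_P : ∀ H : Subgroup G, IsPGroup p H → H ≤ P)
    {S : Set G} (hS : S ∈ pCosets p G) : (P : Set G) * S ∈ pCosets p G := by
  obtain ⟨H, x, hH, rfl⟩ := hS
  exact ⟨P, x, hP, mul_image_mul_right_of_le (le_P H hH) x⟩

theorem mul_eq_mul_of_subset (le_P : ∀ H : Subgroup G, IsPGroup p H → H ≤ P)
    {S T : Set G} (hS : S ∈ pCosets p G) (hT : T ∈ pCosets p G) (hST : S ⊆ T) :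
    (P : Set G) * S = (P : Set G) * T := by
  obtain ⟨H, x, hH, rfl⟩ := hT
  obtain ⟨K, y, hK, rfl⟩ := hS
  have hy : y ∈ (· * x) '' (H : Set G) := hST ⟨1, K.one_mem, one_mul y⟩
  rw [mul_image_mul_right_of_le (le_P K hK), mul_image_mul_right_of_le (le_P H hH)]
  exact image_mul_right_eq_of_mem (Set.image_mono (le_P H hH) hy)

def pCosetsHull (hP : IsPGroup p P) (le_P : ∀ H : Subgroup G, IsPGroup p H → H ≤ P)
    (S : pCosets p G) : pCosets p G :=
  ⟨(P : Set G) * S, mul_mem_pCosets hP le_P S.2⟩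

theorem card_fixedPoints_pCosetsHull (hP : IsPGroup p P)
    (le_P : ∀ H : Subgroup G, IsPGroup p H → H ≤ P) :
    Nat.card (Function.fixedPoints (pCosetsHull hP le_P)) = P.index := by
  let rightCoset :
      Quotient (QuotientGroup.rightRel P) → Function.fixedPoints (pCosetsHull hP le_P) :=
    Quotient.lift
      (fun x => ⟨⟨(· * x) '' (P : Set G), P, x, hP, rfl⟩,
        Subtype.ext (mul_image_mul_right_of_le le_rfl x)⟩)
      fun x y hxy => Subtype.ext <| Subtype.ext <| (image_mul_right_eq_of_mem <|
        mem_image_mul_right_iff.2 <| QuotientGroup.rightRel_apply.1 hxy).symm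
  have injective : Function.Injective rightCoset := by
    rintro ⟨x⟩ ⟨y⟩ h
    have hxy : (· * y) '' (P : Set G) = (· * x) '' P := congrArg (fun S => S.1.1) h.symm
    refine Quotient.sound (QuotientGroup.rightRel_apply.2 ?_)
    rw [← mem_image_mul_right_iff, ← hxy]
    exact ⟨1, P.one_mem, one_mul y⟩
  have surjective : Function.Surjective rightCoset := by
    rintro ⟨⟨S, H, x, hH, rfl⟩, hfix⟩
    refine ⟨⟦x⟧, Subtype.ext (Subtype.ext ?_)⟩
    change (· * x) '' (P : Set G) = _
    rw [← mul_image_mul_right_of_le (le_P H hH) x]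
    exact congrArg Subtype.val hfix
  rw [Subgroup.index, ← Nat.card_congr (QuotientGroup.quotientRightRelEquivQuotientLeftRel P),
    Nat.card_eq_of_bijective rightCoset ⟨injective, surjective⟩]

theorem posetEulerChar_pCosets_eq_index [Finite G] (hP : IsPGroup p P)
    (le_P : ∀ H : Subgroup G, IsPGroup p H → H ≤ P) :
    posetEulerChar (pCosets p G) = P.index := by
  rw [posetEulerChar_eq_card_fixedPoints (pCosetsHull hP le_P)
    (fun S => Set.subset_mul_right S.1 P.one_mem)
    (fun S T hST => Subtype.ext (mul_eq_mul_of_subset le_P S.2 T.2 hST)),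
    card_fixedPoints_pCosetsHull]

end CosetHull

theorem IsPGroup.le_of_normal_sylow {G : Type*} [Group G] [Finite G] {p : ℕ} [Fact p.Prime]
    {P : Sylow p G} (hP : (P : Subgroup G).Normal) {H : Subgroup G} (hH : IsPGroup p H) :
    H ≤ P := by
  obtain ⟨Q, hQ⟩ := hH.exists_le_sylow
  have := Sylow.unique_of_normal P hP
  rwa [Subsingleton.elim Q P] at hQ

theorem Sylow.index_eq_ordCompl {G : Type*} [Group G] [Finite G] {p : ℕ} [hp : Fact p.Prime]
    (P : Sylow p G) : (P : Subgroup G).index = ordCompl[p] (Nat.card G) := by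
  have h := (P : Subgroup G).index_mul_card
  rw [P.card_eq_multiplicity] at h
  exact (Nat.div_eq_of_eq_mul_left (pow_pos hp.out.pos _) h.symm).symm

/-- If `G` is `p`-closed (has a normal Sylow `p`-subgroup), then `χ(C_p(G)) = |G|_{p'}`. -/
theorem euler_char_pCosets_of_pClosed {G : Type*} [Group G] [Fintype G] {p : ℕ}
    (hp : p.Prime) (hclosed : ∃ P : Sylow p G, (P : Subgroup G).Normal) :
    posetEulerChar ↥(pCosets p G) = ((ordCompl[p] (Fintype.card G) : ℕ) : ℤ) := by
  have := Fact.mk hp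
  obtain ⟨P, hP⟩ := hclosed
  rw [posetEulerChar_pCosets_eq_index P.isPGroup' fun _ hH => hH.le_of_normal_sylow hP,
    P.index_eq_ordCompl, Nat.card_eq_fintype_card]
end

section
/- Let G be a finite group that is not p-closed, for a prime p, and let p^d = min{ |P : P ∩ Q| : P, Q are distinct Sylow p-subgroups of G }. Then χ_p(G) = χ(C_p(G))/|G|_{p'} ≡ 1 (mod p^d). -/
/-!
Translating a chain `s` of cosets in `C_p(G)` on the right by `y⁻¹`, for `y` in its smallest
member, gives a chain of `p`-subgroups. Counting the pairs `(s, y)` in two ways gives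
`|P| χ(C_p(G)) = |G| χ_p(G)`, where `P` is a Sylow `p`-subgroup and `χ_p(G)` is the sum of
`(-1)^(|t|+1) |P : min t|` over the chains `t` of `p`-subgroups.

Modulo `p^d` only the chains `t` with `p^d ∤ |P : min t|` survive. For these, `min t` lies in a
unique Sylow subgroup `S`: if `min t ≤ Q ∩ R` with `Q ≠ R`, then `|Q : Q ∩ R|`, a power of `p`
that is at least `p^d`, divides `|Q : min t|`. So every member of `t` lies in `S`, and adding
or removing `S` pairs off these chains with opposite signs, except the singletons `{S}`, each
of which contributes `1`. Hence `χ_p(G) ≡ |Syl_p(G)| (mod p^d)`. Finally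
`|Syl_p(G)| ≡ 1 (mod p^d)`: the orbits of `P` on the other Sylow subgroups `Q` have size
`|P : P ∩ Q|`, a power of `p` that is at least `p^d`.
-/

open Finset
open scoped Classical Pointwise RightActions

section Chains

variable {α β : Type*}

noncomputable def chainsIn [PartialOrder α] [Fintype α] (S : Set α) : Finset (Finset α) :=
  {s | ↑s ⊆ S ∧ s.Nonempty ∧ IsChain (· ≤ ·) (s : Set α)}

theorem mem_chainsIn [PartialOrder α] [Fintype α] {S : Set α} {s : Finset α} :
    s ∈ chainsIn S ↔ ↑s ⊆ S ∧ s.Nonempty ∧ IsChain (· ≤ ·) (s : Set α) := by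
  simp [chainsIn]

theorem posetEulerChar_eq_sum_chainsIn [PartialOrder α] [Fintype α] (S : Set α) :
    posetEulerChar S = ∑ s ∈ chainsIn S, (-1 : ℤ) ^ (#s + 1) := by
  rw [posetEulerChar]
  generalize Fintype.ofFinite S = inst
  rw [powerset_univ, ← sum_filter]
  refine sum_nbij' (·.map (.subtype (· ∈ S))) (·.subtype (· ∈ S)) ?_ ?_ ?_ ?_ ?_
  · intro s hs
    simp only [mem_filter, mem_univ, true_and] at hs
    refine mem_chainsIn.2 ⟨?_, hs.1.map, ?_⟩
    · intro x hx
      obtain ⟨y, -, rfl⟩ := mem_map.1 hx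
      exact y.2
    · rw [coe_map]
      exact hs.2.image_of_map_rel _ _ Subtype.val fun _ _ h => h
  · intro s hs
    obtain ⟨hS, ⟨x, hx⟩, hc⟩ := mem_chainsIn.1 hs
    simp only [mem_filter, mem_univ, true_and]
    refine ⟨⟨⟨x, hS hx⟩, by simpa using hx⟩, ?_⟩
    refine (hc.preimage _ _ _ Subtype.val_injective fun (x y : S) (h : x.1 ≤ y.1) => h).mono ?_
    intro x hx
    simpa using hx
  · intro s _
    ext x
    simp
  · intro s hs
    rw [subtype_map]
    exact filter_true_of_mem fun x hx => (mem_chainsIn.1 hs).1 hx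
  · intro s _
    simp

theorem image_mem_chainsIn [PartialOrder α] [Fintype α] [PartialOrder β] [Fintype β]
    {S : Set α} {T : Set β} {f : α → β} (hf : Monotone f) {s : Finset α} (hs : s ∈ chainsIn S)
    (hT : ∀ x ∈ s, f x ∈ T) : s.image f ∈ chainsIn T := by
  obtain ⟨-, hne, hc⟩ := mem_chainsIn.1 hs
  refine mem_chainsIn.2 ⟨?_, hne.image f, ?_⟩
  · intro y hy
    obtain ⟨x, hx, rfl⟩ := mem_image.1 hy
    exact hT x hx
  · rw [coe_image]
    exact hf.isChain_image hc

theorem inf_id_mem_of_isChain [SemilatticeInf α] [OrderTop α] {t : Finset α} (hne : t.Nonempty)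
    (hc : IsChain (· ≤ ·) (t : Set α)) : t.inf id ∈ t := by
  rw [← inf'_eq_inf hne]
  refine inf'_mem (t : Set α) (fun x hx y hy => ?_) t hne id fun _ h => h
  rcases hc.total hx hy with h | h
  · rwa [inf_eq_left.2 h]
  · rwa [inf_eq_right.2 h]

theorem inf_id_mem_of_mem_chainsIn [SemilatticeInf α] [OrderTop α] [Fintype α] {S : Set α}
    {t : Finset α} (ht : t ∈ chainsIn S) : t.inf id ∈ S :=
  (mem_chainsIn.1 ht).1 (inf_id_mem_of_isChain (mem_chainsIn.1 ht).2.1 (mem_chainsIn.1 ht).2.2)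

def toggle [DecidableEq α] (a : α) (t : Finset α) : Finset α :=
  if a ∈ t then t.erase a else insert a t

section Toggle

variable [DecidableEq α] (a : α) (t : Finset α)

theorem toggle_toggle : toggle a (toggle a t) = t := by
  by_cases ha : a ∈ t
  · simp [toggle, ha, insert_erase]
  · simp [toggle, ha]

theorem toggle_ne_self : toggle a t ≠ t := by
  by_cases ha : a ∈ t <;> simp [toggle, ha, Finset.ext_iff]

theorem neg_one_pow_card_toggle : (-1 : ℤ) ^ (#(toggle a t) + 1) = -(-1) ^ (#t + 1) := by
  by_cases ha : a ∈ t
  · rw [toggle, if_pos ha, ← card_erase_add_one ha]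
    ring
  · rw [toggle, if_neg ha, card_insert_of_notMem ha]
    ring

end Toggle

section ToggleChain

variable [SemilatticeInf α] [OrderTop α] [DecidableEq α] {a : α} {t : Finset α}

theorem inf_toggle (hmem : t.inf id ∈ t) (hle : t.inf id ≤ a) (hne : t.inf id ≠ a) :
    (toggle a t).inf id = t.inf id := by
  by_cases ha : a ∈ t
  · rw [toggle, if_pos ha]
    exact le_antisymm (inf_le (mem_erase.2 ⟨hne, hmem⟩)) (inf_mono (erase_subset a t))
  · rw [toggle, if_neg ha, inf_insert, id, inf_eq_right.2 hle]

theorem toggle_mem_chainsIn [Fintype α] {S : Set α} (ht : t ∈ chainsIn S) (ha : a ∈ S)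
    (hle : ∀ x ∈ t, x ≤ a) (hne : t.inf id ≠ a) : toggle a t ∈ chainsIn S := by
  obtain ⟨hS, hne', hc⟩ := mem_chainsIn.1 ht
  have hmem : t.inf id ∈ t := inf_id_mem_of_isChain hne' hc
  by_cases hat : a ∈ t
  · rw [toggle, if_pos hat]
    refine mem_chainsIn.2 ⟨fun x hx => hS (mem_of_mem_erase hx), ⟨_, mem_erase.2 ⟨hne, hmem⟩⟩, ?_⟩
    exact hc.mono (coe_subset.2 (erase_subset a t))
  · rw [toggle, if_neg hat]
    refine mem_chainsIn.2 ⟨?_, insert_nonempty a t, ?_⟩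
    · rw [coe_insert]
      exact Set.insert_subset ha hS
    · rw [coe_insert]
      exact hc.insert fun x hx _ => Or.inr (hle x hx)

end ToggleChain

end Chains

theorem inf_id_smul_finset {K X : Type*} [Group K] [MulAction K X] (a : K) (t : Finset (Set X)) :
    (a • t).inf id = a • t.inf id := by
  rw [smul_finset_def, inf_image]
  exact (apply_inf_eq_inf_comp (a • ·) (fun _ _ => Set.smul_set_inter) Set.smul_set_univ).symm

section Cosets

variable {G : Type*} [Group G] {p : ℕ}

def pSubgroupSets (p : ℕ) (G : Type*) [Group G] : Set (Set G) :=
  {S | ∃ H : Subgroup G, IsPGroup p H ∧ S = H}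

theorem op_smul_mem_pCosets {S : Set G} (hS : S ∈ pCosets p G) (g : G) : S <• g ∈ pCosets p G := by
  obtain ⟨H, x, hH, rfl⟩ := hS
  refine ⟨H, x * g, hH, ?_⟩
  change (H : Set G) <• x <• g = (H : Set G) <• (x * g)
  rw [smul_smul]
  rfl

theorem pSubgroupSets_subset_pCosets : pSubgroupSets p G ⊆ pCosets p G := by
  rintro _ ⟨H, hH, rfl⟩
  exact ⟨H, 1, hH, by simp⟩

theorem op_smul_inv_mem_pSubgroupSets {S : Set G} (hS : S ∈ pCosets p G) {y : G} (hy : y ∈ S) :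
    S <• y⁻¹ ∈ pSubgroupSets p G := by
  obtain ⟨H, x, hH, rfl⟩ := hS
  have hxy : x * y⁻¹ ∈ H := by
    change y ∈ (H : Set G) <• x at hy
    rw [Set.mem_smul_set_iff_inv_smul_mem] at hy
    simpa using H.inv_mem hy
  refine ⟨H, hH, ?_⟩
  change (H : Set G) <• x <• y⁻¹ = H
  rw [smul_smul, ← MulOpposite.op_mul]
  exact op_smul_coe_set hxy

theorem ncard_dvd_ordProj_of_mem_pCosets [Finite G] [Fact p.Prime] {S : Set G}
    (hS : S ∈ pCosets p G) : S.ncard ∣ ordProj[p] (Nat.card G) := by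
  obtain ⟨H, x, hH, rfl⟩ := hS
  obtain ⟨P, hP⟩ := hH.exists_le_sylow
  change ((H : Set G) <• x).ncard ∣ _
  rw [Set.ncard_smul_set, ← Nat.card_coe_set_eq, SetLike.coe_sort_coe, ← P.card_eq_multiplicity]
  exact Subgroup.card_dvd_of_le hP

end Cosets

section EulerChar

variable {G : Type*} [Group G] {p : ℕ}

/-- For a chain `t` of `p`-subgroups this is the index of `min t` in any Sylow `p`-subgroup
containing it. -/
noncomputable def chainIndex (p : ℕ) (t : Finset (Set G)) : ℕ :=
  ordProj[p] (Nat.card G) / (t.inf id).ncard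

noncomputable def chainTerm (p : ℕ) (t : Finset (Set G)) : ℤ :=
  (-1) ^ (#t + 1) * chainIndex p t

theorem chainTerm_op_smul (t : Finset (Set G)) (g : G) : chainTerm p (t <• g) = chainTerm p t := by
  simp only [chainTerm, chainIndex, card_smul_finset, inf_id_smul_finset, Set.ncard_smul_set]

variable [Fintype G]

noncomputable def pEulerChar (p : ℕ) (G : Type*) [Group G] [Fintype G] : ℤ :=
  ∑ t ∈ chainsIn (pSubgroupSets p G), chainTerm p t

theorem op_smul_inv_mem_chainsIn_pSubgroupSets {s : Finset (Set G)}
    (hs : s ∈ chainsIn (pCosets p G)) {y : G} (hy : y ∈ s.inf id) :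
    s <• y⁻¹ ∈ chainsIn (pSubgroupSets p G) :=
  image_mem_chainsIn (fun _ _ h => Set.smul_set_mono h) hs fun S hS =>
    op_smul_inv_mem_pSubgroupSets ((mem_chainsIn.1 hs).1 hS) ((inf_le hS : s.inf id ≤ S) hy)

theorem op_smul_mem_chainsIn_pCosets {t : Finset (Set G)}
    (ht : t ∈ chainsIn (pSubgroupSets p G)) (g : G) : t <• g ∈ chainsIn (pCosets p G) :=
  image_mem_chainsIn (fun _ _ h => Set.smul_set_mono h) ht fun _ hS =>
    op_smul_mem_pCosets (pSubgroupSets_subset_pCosets ((mem_chainsIn.1 ht).1 hS)) g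

theorem mem_inf_id_op_smul {t : Finset (Set G)} (ht : t ∈ chainsIn (pSubgroupSets p G)) (g : G) :
    g ∈ (t <• g).inf id := by
  obtain ⟨H, -, hH⟩ := inf_id_mem_of_mem_chainsIn ht
  rw [inf_id_smul_finset, hH]
  simpa using Set.smul_mem_smul_set (a := MulOpposite.op g) H.one_mem

theorem sum_chainsIn_pCosets_sum_mem_inf_id :
    ∑ s ∈ chainsIn (pCosets p G), ∑ _y ∈ (s.inf id).toFinset, chainTerm p s =
      ∑ t ∈ chainsIn (pSubgroupSets p G), ∑ _y : G, chainTerm p t := by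
  rw [sum_sigma', sum_sigma']
  refine sum_nbij' (fun x => ⟨x.1 <• x.2⁻¹, x.2⟩) (fun x => ⟨x.1 <• x.2, x.2⟩) ?_ ?_ ?_ ?_ ?_
  · rintro ⟨s, y⟩ h
    simp only [mem_sigma, Set.mem_toFinset] at h
    exact mem_sigma.2 ⟨op_smul_inv_mem_chainsIn_pSubgroupSets h.1 h.2, mem_univ _⟩
  · rintro ⟨t, y⟩ h
    simp only [mem_sigma, mem_univ, and_true] at h
    exact mem_sigma.2
      ⟨op_smul_mem_chainsIn_pCosets h y, Set.mem_toFinset.2 (mem_inf_id_op_smul h y)⟩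
  · rintro ⟨s, y⟩ -
    simp [smul_smul]
  · rintro ⟨t, y⟩ -
    simp [smul_smul]
  · rintro ⟨s, y⟩ -
    exact (chainTerm_op_smul s y⁻¹).symm

theorem posetEulerChar_pCosets_eq_ordCompl_mul [Fact p.Prime] :
    posetEulerChar (pCosets p G) = (ordCompl[p] (Nat.card G) : ℕ) * pEulerChar p G := by
  refine mul_left_cancel₀ (Nat.cast_ne_zero.2 (Nat.ordProj_pos (Nat.card G) p).ne') ?_
  calc ((ordProj[p] (Nat.card G) : ℕ) : ℤ) * posetEulerChar (pCosets p G)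
      = ∑ s ∈ chainsIn (pCosets p G), ∑ _y ∈ (s.inf id).toFinset, chainTerm p s := by
        rw [posetEulerChar_eq_sum_chainsIn, mul_sum]
        refine sum_congr rfl fun s hs => ?_
        rw [sum_const, ← Set.ncard_eq_toFinset_card', nsmul_eq_mul, chainTerm, chainIndex,
          mul_left_comm, ← Nat.cast_mul,
          Nat.mul_div_cancel' (ncard_dvd_ordProj_of_mem_pCosets (inf_id_mem_of_mem_chainsIn hs)),
          mul_comm]
    _ = ∑ t ∈ chainsIn (pSubgroupSets p G), ∑ _y : G, chainTerm p t :=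
        sum_chainsIn_pCosets_sum_mem_inf_id
    _ = (Nat.card G : ℤ) * pEulerChar p G := by
        simp [pEulerChar, mul_sum, Nat.card_eq_fintype_card]
    _ = _ := by
        rw [← mul_assoc, ← Nat.cast_mul, Nat.ordProj_mul_ordCompl_eq_self]

end EulerChar

theorem MulAction.card_modEq_one_of_dvd_card_orbit {K α : Type*} [Group K] [MulAction K α]
    [Finite α] {N : ℕ} {a : α} (ha : a ∈ fixedPoints K α)
    (h : ∀ b ≠ a, N ∣ Nat.card (orbit K b)) : Nat.card α ≡ 1 [MOD N] := by
  have := Fintype.ofFinite α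
  rw [Nat.card_congr (selfEquivSigmaOrbits' K α), Nat.card_sigma,
    ← add_sum_erase _ _ (mem_univ (Quotient.mk'' a)), orbitRel.Quotient.orbit_mk,
    Nat.card_eq_fintype_card, mem_fixedPoints_iff_card_orbit_eq_one.1 ha]
  refine (Nat.modEq_zero_iff_dvd.2 (dvd_sum fun ω hω => ?_)).add_left 1
  induction ω using Quotient.inductionOn' with
  | h b =>
    rw [orbitRel.Quotient.orbit_mk]
    exact h b fun hb => (mem_erase.1 hω).1 (hb ▸ rfl)

section Sylow

open MulAction Subgroup

variable {G : Type*} [Group G] {p d : ℕ}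

noncomputable def sylowAbove (p : ℕ) (B : Set G) : Sylow p G :=
  Classical.epsilon fun P : Sylow p G => B ⊆ (P : Subgroup G)

theorem subset_sylowAbove {H : Subgroup G} (hH : IsPGroup p H) :
    (H : Set G) ⊆ (sylowAbove p (H : Set G) : Subgroup G) :=
  Classical.epsilon_spec (p := fun P : Sylow p G => (H : Set G) ⊆ (P : Subgroup G))
    (hH.exists_le_sylow.imp fun _ => SetLike.coe_subset_coe.2)

variable [hp : Fact p.Prime] [Finite G]

theorem Sylow.pow_dvd_card_orbit
    (hmin : ∀ P Q : Sylow p G, P ≠ Q → p ^ d ≤ ((P : Subgroup G) ⊓ Q).relIndex P)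
    {P Q : Sylow p G} (hne : Q ≠ P) : p ^ d ∣ Nat.card (orbit (P : Subgroup G) Q) := by
  obtain ⟨k, hk⟩ := P.isPGroup'.card_orbit Q
  have hstab :
      stabilizer (P : Subgroup G) Q = (normalizer (Q : Set G)).subgroupOf (P : Subgroup G) := by
    ext g
    exact Sylow.smul_eq_iff_mem_normalizer
  have horbit : Nat.card (orbit (P : Subgroup G) Q) = ((P : Subgroup G) ⊓ Q).relIndex P := by
    rw [Nat.card_coe_set_eq, ← index_stabilizer, hstab, ← P.isPGroup'.inf_normalizer_sylow,
      inf_relIndex_left]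
    rfl
  have hle := hmin P Q hne.symm
  rw [← horbit, hk] at hle
  rw [hk]
  exact pow_dvd_pow p ((Nat.pow_le_pow_iff_right hp.out.one_lt).1 hle)

theorem card_sylow_modEq_one_pow
    (hmin : ∀ P Q : Sylow p G, P ≠ Q → p ^ d ≤ ((P : Subgroup G) ⊓ Q).relIndex P) :
    Nat.card (Sylow p G) ≡ 1 [MOD p ^ d] := by
  obtain ⟨P⟩ : Nonempty (Sylow p G) := inferInstance
  exact MulAction.card_modEq_one_of_dvd_card_orbit (K := (P : Subgroup G))
    (P.isPGroup'.sylow_mem_fixedPoints_iff.2 le_rfl) fun Q hQ => Sylow.pow_dvd_card_orbit hmin hQ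

theorem Sylow.relIndex_eq_ordProj_div {H : Subgroup G} {P : Sylow p G} (hH : H ≤ P) :
    H.relIndex P = ordProj[p] (Nat.card G) / Nat.card H := by
  have hcard := relIndex_mul_relIndex ⊥ H P bot_le hH
  rw [relIndex_bot_left, relIndex_bot_left] at hcard
  rw [← P.card_eq_multiplicity, ← hcard, Nat.mul_div_cancel_left _ Nat.card_pos]

theorem Sylow.eq_of_not_pow_dvd_relIndex
    (hmin : ∀ P Q : Sylow p G, P ≠ Q → p ^ d ≤ ((P : Subgroup G) ⊓ Q).relIndex P)
    {H : Subgroup G} {P Q : Sylow p G} (hP : H ≤ P) (hQ : H ≤ Q)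
    (h : ¬ p ^ d ∣ H.relIndex P) : P = Q := by
  by_contra hne
  obtain ⟨k, -, hk⟩ : ∃ k ≤ _, ((P : Subgroup G) ⊓ Q).relIndex P = p ^ k :=
    (Nat.dvd_prime_pow hp.out).1 (P.card_eq_multiplicity ▸ relIndex_dvd_card _ _)
  have hle := hmin P Q hne
  rw [hk] at hle
  refine h ((pow_dvd_pow p ((Nat.pow_le_pow_iff_right hp.out.one_lt).1 hle)).trans ?_)
  exact hk ▸ relIndex_dvd_of_le_left _ (le_inf hP hQ)

end Sylow

section Involution

variable {G : Type*} [Group G] [Fintype G] {p d : ℕ}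

theorem eq_singleton_of_inf_id_eq_sylow {t : Finset (Set G)}
    (ht : t ∈ chainsIn (pSubgroupSets p G)) {P : Sylow p G}
    (hP : (t.inf id : Set G) = (P : Subgroup G)) :
    t = {((P : Subgroup G) : Set G)} := by
  refine eq_singleton_iff_unique_mem.2 ⟨hP ▸ ?_, fun S hS => ?_⟩
  · exact inf_id_mem_of_isChain (mem_chainsIn.1 ht).2.1 (mem_chainsIn.1 ht).2.2
  · obtain ⟨K, hK, rfl⟩ := (mem_chainsIn.1 ht).1 hS
    rw [P.is_maximal' hK (SetLike.coe_subset_coe.1 (hP ▸ inf_le (f := id) hS))]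

theorem singleton_sylow_mem_chainsIn (P : Sylow p G) :
    {((P : Subgroup G) : Set G)} ∈ chainsIn (pSubgroupSets p G) :=
  mem_chainsIn.2 ⟨by simpa using ⟨P, P.isPGroup', rfl⟩, singleton_nonempty _, by simp⟩

variable [Fact p.Prime]

theorem subset_sylowAbove_of_not_dvd
    (hmin : ∀ P Q : Sylow p G, P ≠ Q → p ^ d ≤ ((P : Subgroup G) ⊓ Q).relIndex P)
    {t : Finset (Set G)} (ht : t ∈ chainsIn (pSubgroupSets p G))
    (hindex : ¬ p ^ d ∣ chainIndex p t) :
    ∀ S ∈ t, S ⊆ (sylowAbove p (t.inf id) : Subgroup G) := by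
  intro S hS
  obtain ⟨H, hH, hHt⟩ := inf_id_mem_of_mem_chainsIn ht
  obtain ⟨K, hK, rfl⟩ := (mem_chainsIn.1 ht).1 hS
  obtain ⟨Q, hKQ⟩ := hK.exists_le_sylow
  have hHK : H ≤ K := by
    rw [← SetLike.coe_subset_coe, ← hHt]
    exact inf_le (f := id) hS
  have hHA : H ≤ (sylowAbove p (t.inf id) : Subgroup G) := by
    rw [← SetLike.coe_subset_coe, hHt]
    exact subset_sylowAbove hH
  have hindex' : ¬ p ^ d ∣ H.relIndex (sylowAbove p (t.inf id) : Subgroup G) := by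
    rw [Sylow.relIndex_eq_ordProj_div hHA, ← SetLike.coe_sort_coe, Nat.card_coe_set_eq, ← hHt]
    exact hindex
  rw [Sylow.eq_of_not_pow_dvd_relIndex hmin hHA (hHK.trans hKQ) hindex']
  exact SetLike.coe_subset_coe.2 hKQ

theorem toggle_sylowAbove_spec
    (hmin : ∀ P Q : Sylow p G, P ≠ Q → p ^ d ≤ ((P : Subgroup G) ⊓ Q).relIndex P)
    {t : Finset (Set G)} (ht : t ∈ chainsIn (pSubgroupSets p G))
    (hsylow : ¬ ∃ P : Sylow p G, (t.inf id : Set G) = (P : Subgroup G))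
    (hindex : ¬ p ^ d ∣ chainIndex p t) :
    toggle ((sylowAbove p (t.inf id) : Subgroup G) : Set G) t ∈ chainsIn (pSubgroupSets p G) ∧
      (toggle ((sylowAbove p (t.inf id) : Subgroup G) : Set G) t).inf id = t.inf id := by
  have hle := subset_sylowAbove_of_not_dvd hmin ht hindex
  have hne : t.inf id ≠ (sylowAbove p (t.inf id) : Subgroup G) := fun h => hsylow ⟨_, h⟩
  have hmem := inf_id_mem_of_isChain (mem_chainsIn.1 ht).2.1 (mem_chainsIn.1 ht).2.2
  exact ⟨toggle_mem_chainsIn ht ⟨_, (sylowAbove p _).isPGroup', rfl⟩ hle hne,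
    inf_toggle hmem (hle _ hmem) hne⟩

theorem sum_chainTerm_eq_zero_of_not_dvd
    (hmin : ∀ P Q : Sylow p G, P ≠ Q → p ^ d ≤ ((P : Subgroup G) ⊓ Q).relIndex P) :
    ∑ t ∈ chainsIn (pSubgroupSets p G) with
      (¬ ∃ P : Sylow p G, (t.inf id : Set G) = (P : Subgroup G)) ∧ ¬ p ^ d ∣ chainIndex p t,
      chainTerm p t = 0 := by
  refine sum_involution (fun t _ => toggle ((sylowAbove p (t.inf id) : Subgroup G) : Set G) t)
    ?_ ?_ ?_ ?_
  · intro t ht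
    rw [mem_filter] at ht
    rw [chainTerm, chainTerm, chainIndex, chainIndex,
      (toggle_sylowAbove_spec hmin ht.1 ht.2.1 ht.2.2).2, neg_one_pow_card_toggle]
    ring
  · exact fun t _ _ => toggle_ne_self _ t
  · intro t ht
    rw [mem_filter] at ht ⊢
    obtain ⟨hmem, hinf⟩ := toggle_sylowAbove_spec hmin ht.1 ht.2.1 ht.2.2
    rw [chainIndex, hinf]
    exact ⟨hmem, ht.2⟩
  · intro t ht
    rw [mem_filter] at ht
    simp only [(toggle_sylowAbove_spec hmin ht.1 ht.2.1 ht.2.2).2, toggle_toggle]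

theorem sum_chainTerm_of_inf_id_eq_sylow :
    ∑ t ∈ chainsIn (pSubgroupSets p G) with ∃ P : Sylow p G, (t.inf id : Set G) = (P : Subgroup G),
      chainTerm p t = Nat.card (Sylow p G) := by
  have himage : (chainsIn (pSubgroupSets p G)).filter
      (fun t => ∃ P : Sylow p G, (t.inf id : Set G) = (P : Subgroup G)) =
      (Set.finite_univ (α := Sylow p G)).toFinset.image
        fun P : Sylow p G => ({((P : Subgroup G) : Set G)} : Finset (Set G)) := by
    ext t
    simp only [mem_filter, mem_image, Set.Finite.mem_toFinset, Set.mem_univ, true_and]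
    constructor
    · rintro ⟨ht, P, hP⟩
      exact ⟨P, (eq_singleton_of_inf_id_eq_sylow ht hP).symm⟩
    · rintro ⟨P, rfl⟩
      exact ⟨singleton_sylow_mem_chainsIn P, P, by simp⟩
  have hterm (P : Sylow p G) : chainTerm p {((P : Subgroup G) : Set G)} = 1 := by
    rw [chainTerm, chainIndex, inf_singleton, id, ← Nat.card_coe_set_eq, SetLike.coe_sort_coe,
      ← P.card_eq_multiplicity, Nat.div_self Nat.card_pos]
    simp
  rw [himage, sum_image fun P _ Q _ h => Sylow.ext (SetLike.coe_injective (singleton_injective h)),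
    sum_congr rfl fun P _ => hterm P, sum_const, ← Set.ncard_eq_toFinset_card, Set.ncard_univ]
  simp

end Involution

theorem pEulerChar_modEq_card_sylow {G : Type*} [Group G] [Fintype G] {p d : ℕ} [Fact p.Prime]
    (hmin : ∀ P Q : Sylow p G, P ≠ Q → p ^ d ≤ ((P : Subgroup G) ⊓ Q).relIndex P) :
    pEulerChar p G ≡ Nat.card (Sylow p G) [ZMOD p ^ d] := by
  rw [pEulerChar, ← sum_filter_add_sum_filter_not _
      (fun t => ∃ P : Sylow p G, (t.inf id : Set G) = (P : Subgroup G)),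
    sum_chainTerm_of_inf_id_eq_sylow, ← sum_filter_add_sum_filter_not _
      (fun t => p ^ d ∣ chainIndex p t), filter_filter, filter_filter,
    sum_chainTerm_eq_zero_of_not_dvd hmin, add_zero]
  refine ((Int.modEq_zero_iff_dvd.2 (dvd_sum fun t ht => ?_)).add_left _).trans (by rw [add_zero])
  exact Dvd.dvd.mul_left (by exact_mod_cast (mem_filter.1 ht).2.2) _

theorem euler_char_pCosets_div_ordCompl_modEq_one_pow_general {G : Type*} [Group G] [Fintype G]
    {p : ℕ} (hp : p.Prime)
    (d : ℕ)
    (hd : p ^ d = sInf {n : ℕ | ∃ P Q : Sylow p G, P ≠ Q ∧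
      n = ((P : Subgroup G) ⊓ (Q : Subgroup G)).relIndex (P : Subgroup G)}) :
    ∃ χp : ℤ,
      posetEulerChar ↥(pCosets p G) = ((ordCompl[p] (Fintype.card G) : ℕ) : ℤ) * χp ∧
      χp ≡ 1 [ZMOD (p : ℤ) ^ d] := by
  have := Fact.mk hp
  have hmin (P Q : Sylow p G) (hne : P ≠ Q) : p ^ d ≤ ((P : Subgroup G) ⊓ Q).relIndex P :=
    hd ▸ Nat.sInf_le ⟨P, Q, hne, rfl⟩
  refine ⟨pEulerChar p G, ?_, (pEulerChar_modEq_card_sylow hmin).trans ?_⟩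
  · rw [posetEulerChar_pCosets_eq_ordCompl_mul, Nat.card_eq_fintype_card]
  · exact_mod_cast card_sylow_modEq_one_pow hmin

/-- If `G` is not `p`-closed and `p^d = min { |P : P ∩ Q| : P ≠ Q Sylow p-subgroups }`, then
`χ_p(G) = χ(C_p(G))/|G|_{p'} ≡ 1 (mod p^d)`. -/
theorem euler_char_pCosets_div_ordCompl_modEq_one_pow {G : Type*} [Group G] [Fintype G]
    {p : ℕ} (hp : p.Prime)
    (hnc : ¬ ∃ P : Sylow p G, (P : Subgroup G).Normal)
    (d : ℕ)
    (hd : p ^ d = sInf {n : ℕ | ∃ P Q : Sylow p G, P ≠ Q ∧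
      n = ((P : Subgroup G) ⊓ (Q : Subgroup G)).relIndex (P : Subgroup G)}) :
    ∃ χp : ℤ,
      posetEulerChar ↥(pCosets p G) = ((ordCompl[p] (Fintype.card G) : ℕ) : ℤ) * χp ∧
      χp ≡ 1 [ZMOD (p : ℤ) ^ d] :=
  euler_char_pCosets_div_ordCompl_modEq_one_pow_general hp d hd
end

section
/- Let G be a finite group, p a prime, and N a normal p-subgroup of G. Then χ(C_p(G)) = χ(C_p(G/N)). -/
/-!
For the quotient map `f : G → G/N`, `S ↦ f⁻¹(f S)` is a closure operator on `C_p(G)` (it sends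
`Hx` to `(NH)x`, and `NH` is again a `p`-group), and its closed elements form a copy of
`C_p(G/N)`: image and preimage are a Galois insertion. A closure operator `c` on a finite poset
preserves the Euler characteristic: if `x` is a maximal non-closed element, then `c x` is the
least element above `x`, so the chains through `x` cancel in pairs `σ ↔ σ ∪ {c x}`, and `x` can
be removed without changing `χ`; repeat until only closed elements are left.
-/

open Finset

theorem Finset.powerset_map {α β : Type*} (f : α ↪ β) (A : Finset α) :
    (A.map f).powerset = A.powerset.map (mapEmbedding f).toEmbedding := by
  ext s
  simp only [mem_powerset, mem_map, RelEmbedding.coe_toEmbedding,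
    mapEmbedding_apply, subset_map_iff]
  exact ⟨fun ⟨t, ht, hs⟩ => ⟨t, ht, hs.symm⟩, fun ⟨t, ht, hs⟩ => ⟨t, ht, hs.symm⟩⟩

section EulerChar

variable {P Q : Type*} [PartialOrder P] [PartialOrder Q]

open scoped Classical

noncomputable def chainSign (s : Finset P) : ℤ :=
  if s.Nonempty ∧ IsChain (· ≤ ·) (s : Set P) then (-1) ^ (s.card + 1) else 0

noncomputable def posetEulerCharOn (A : Finset P) : ℤ :=
  ∑ s ∈ A.powerset, chainSign s

theorem chainSign_map (e : P ↪o Q) (s : Finset P) :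
    chainSign (s.map e.toEmbedding) = chainSign s := by
  have hchain : IsChain (· ≤ ·) (e '' s) ↔ IsChain (· ≤ ·) (s : Set P) :=
    IsChain.image_embedding_iff
  simp only [chainSign, map_nonempty, card_map, coe_map, RelEmbedding.coe_toEmbedding, hchain]

theorem chainSign_insert_of_lt {s : Finset P} {x m : P} (hx : x ∈ s) (hms : m ∉ s) (hxm : x < m)
    (hm : ∀ y ∈ s, x < y → m ≤ y) : chainSign (insert m s) = -chainSign s := by
  have hchain : IsChain (· ≤ ·) ((insert m s : Finset P) : Set P) ↔
      IsChain (· ≤ ·) (s : Set P) := by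
    rw [coe_insert]
    refine ⟨fun h => h.mono (Set.subset_insert _ _), fun h => h.insert fun y hy _ => ?_⟩
    obtain rfl | hyx := eq_or_ne y x
    · exact Or.inr hxm.le
    rcases h hx hy hyx.symm with hxy | hyx'
    · exact Or.inl (hm y hy (lt_of_le_of_ne hxy hyx.symm))
    · exact Or.inr (hyx'.trans hxm.le)
  have hne : s.Nonempty := ⟨x, hx⟩
  simp only [chainSign, hchain, insert_nonempty, hne, true_and, card_insert_of_notMem hms]
  split_ifs <;> ring

theorem posetEulerChar_eq_posetEulerCharOn_map [Fintype P] (e : P ↪o Q) :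
    posetEulerChar P = posetEulerCharOn (univ.map e.toEmbedding) := by
  rw [posetEulerCharOn, Finset.powerset_map, sum_map]
  simp only [RelEmbedding.coe_toEmbedding, mapEmbedding_apply, chainSign_map]
  unfold posetEulerChar chainSign
  congr!

theorem posetEulerChar_eq_posetEulerCharOn_univ [Fintype P] :
    posetEulerChar P = posetEulerCharOn (univ : Finset P) := by
  simpa using posetEulerChar_eq_posetEulerCharOn_map (RelEmbedding.refl (α := P) (· ≤ ·))

theorem sum_powerset_chainSign_insert_eq_zero {B : Finset P} {x m : P} (hmB : m ∈ B)
    (hxm : x < m) (hm : ∀ y ∈ B, x < y → m ≤ y) :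
    ∑ t ∈ B.powerset, chainSign (insert x t) = 0 := by
  rw [← insert_erase hmB, sum_powerset_insert (notMem_erase m B), ← sum_add_distrib]
  refine sum_eq_zero fun t ht => ?_
  have ht : t ⊆ B.erase m := mem_powerset.mp ht
  have hmt : m ∉ insert x t := fun h =>
    (mem_insert.mp h).elim hxm.ne' fun h => notMem_erase m B (ht h)
  rw [insert_comm, chainSign_insert_of_lt (mem_insert_self x t) hmt hxm, add_neg_cancel]
  intro y hy hxy
  obtain rfl | hyt := mem_insert.mp hy
  · exact absurd hxy (lt_irrefl y)
  · exact hm y (mem_of_mem_erase (ht hyt)) hxy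

theorem posetEulerCharOn_erase_of_isLeast {A : Finset P} {x m : P} (hx : x ∈ A)
    (hm : IsLeast (↑A ∩ Set.Ioi x) m) : posetEulerCharOn A = posetEulerCharOn (A.erase x) := by
  obtain ⟨⟨hmA, hxm : x < m⟩, hleast⟩ := hm
  have hsplit : posetEulerCharOn A = posetEulerCharOn (A.erase x) +
      ∑ t ∈ (A.erase x).powerset, chainSign (insert x t) := by
    conv_lhs => rw [posetEulerCharOn, ← insert_erase hx]
    exact sum_powerset_insert (notMem_erase x A) _
  rw [hsplit, sum_powerset_chainSign_insert_eq_zero (mem_erase.mpr ⟨hxm.ne', hmA⟩) hxm, add_zero]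
  exact fun y hy hxy => hleast ⟨mem_of_mem_erase hy, hxy⟩

theorem posetEulerCharOn_eq_of_closureOperator [Fintype P] (c : ClosureOperator P) {A : Finset P}
    (hA : ∀ x, c.IsClosed x → x ∈ A) :
    posetEulerCharOn A = posetEulerCharOn (univ.filter c.IsClosed) := by
  induction A using strongInduction with
  | H A ih =>
  rcases (A.filter (¬c.IsClosed ·)).eq_empty_or_nonempty with hall | hne
  · congr 1
    ext x
    have := filter_eq_empty_iff.mp hall (x := x)
    simp only [mem_filter, mem_univ, true_and]
    exact ⟨fun hx => not_not.mp (this hx), hA x⟩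
  obtain ⟨x, hmax⟩ := (A.filter (¬c.IsClosed ·)).exists_maximal hne
  have hxA : x ∈ A := (mem_filter.mp hmax.prop).1
  have hx : ¬c.IsClosed x := (mem_filter.mp hmax.prop).2
  have hleast : IsLeast (↑A ∩ Set.Ioi x) (c x) := by
    refine ⟨⟨hA _ (c.isClosed_closure x), lt_of_le_of_ne (c.le_closure x)
      fun h => hx (c.isClosed_iff.mpr h.symm)⟩, fun y ⟨hyA, hxy⟩ => ?_⟩
    have hy : c.IsClosed y := by
      by_contra hy
      exact hxy.not_ge (hmax.2 (mem_filter.mpr ⟨hyA, hy⟩) hxy.le)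
    exact hy.closure_le_iff.mpr hxy.le
  rw [posetEulerCharOn_erase_of_isLeast hxA hleast, ih _ (erase_ssubset hxA)]
  exact fun y hy => mem_erase.mpr ⟨fun h => hx (h ▸ hy), hA y hy⟩

theorem GaloisInsertion.posetEulerChar_eq [Finite P] [Finite Q] {l : P → Q} {u : Q → P}
    (gi : GaloisInsertion l u) : posetEulerChar P = posetEulerChar Q := by
  cases nonempty_fintype P
  cases nonempty_fintype Q
  let uEmb : Q ↪o P := OrderEmbedding.ofMapLEIff u fun _ _ => gi.u_le_u_iff
  have hclosed : univ.filter gi.gc.closureOperator.IsClosed = univ.map uEmb.toEmbedding := by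
    ext x
    simp only [mem_filter, mem_univ, true_and, mem_map, ClosureOperator.isClosed_iff]
    exact ⟨fun h => ⟨l x, h⟩, by rintro ⟨b, _, rfl⟩; exact congrArg u (gi.l_u_eq b)⟩
  rw [posetEulerChar_eq_posetEulerCharOn_univ,
    posetEulerCharOn_eq_of_closureOperator gi.gc.closureOperator fun x _ => mem_univ x,
    hclosed, ← posetEulerChar_eq_posetEulerCharOn_map]

end EulerChar

section pCosets

variable {G G' : Type*} [Group G] [Group G'] {p : ℕ}

theorem image_mem_pCosets (f : G →* G') {S : Set G} (hS : S ∈ pCosets p G) :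
    f '' S ∈ pCosets p G' := by
  obtain ⟨H, x, hH, rfl⟩ := hS
  refine ⟨H.map f, f x, hH.map f, ?_⟩
  rw [Subgroup.coe_map, Set.image_image, Set.image_image]
  simp only [map_mul]

theorem preimage_mem_pCosets {f : G →* G'} (hf : Function.Surjective f) (hker : IsPGroup p f.ker)
    {T : Set G'} (hT : T ∈ pCosets p G') : f ⁻¹' T ∈ pCosets p G := by
  obtain ⟨K, t, hK, rfl⟩ := hT
  obtain ⟨x, rfl⟩ := hf t
  refine ⟨K.comap f, x, hK.comap_of_ker_isPGroup f hker, ?_⟩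
  rw [Set.image_mul_right, Set.image_mul_right, Subgroup.coe_comap, ← Set.preimage_comp,
    ← Set.preimage_comp]
  congr 1
  funext y
  simp only [Function.comp_apply, map_mul, map_inv]

def pCosetsGaloisInsertion {f : G →* G'} (hf : Function.Surjective f) (hker : IsPGroup p f.ker) :
    GaloisInsertion (fun S : pCosets p G => (⟨f '' S, image_mem_pCosets f S.2⟩ : pCosets p G'))
      (fun T => ⟨f ⁻¹' T, preimage_mem_pCosets hf hker T.2⟩) :=
  GaloisConnection.toGaloisInsertion (fun _ _ => Set.image_subset_iff)
    fun T => (Set.image_preimage_eq T.1 hf).ge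

theorem posetEulerChar_pCosets_eq_of_surjective [Finite G] [Finite G'] {f : G →* G'}
    (hf : Function.Surjective f) (hker : IsPGroup p f.ker) :
    posetEulerChar (pCosets p G) = posetEulerChar (pCosets p G') :=
  (pCosetsGaloisInsertion hf hker).posetEulerChar_eq

end pCosets

theorem euler_char_pCosets_quotient_normal_pSubgroup_general {G : Type*} [Group G] [Fintype G]
    {p : ℕ} (N : Subgroup G) (hN_norm : N.Normal) (hN : IsPGroup p N) :
    posetEulerChar ↥(pCosets p G) = posetEulerChar ↥(pCosets p (G ⧸ N)) :=
  posetEulerChar_pCosets_eq_of_surjective (QuotientGroup.mk'_surjective N)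
    (by rwa [QuotientGroup.ker_mk'])

/-- If `N` is a normal `p`-subgroup of `G`, then `χ(C_p(G)) = χ(C_p(G/N))`. -/
theorem euler_char_pCosets_quotient_normal_pSubgroup {G : Type*} [Group G] [Fintype G]
    {p : ℕ} (hp : p.Prime) (N : Subgroup G) (hN_norm : N.Normal) (hN : IsPGroup p N) :
    posetEulerChar ↥(pCosets p G) = posetEulerChar ↥(pCosets p (G ⧸ N)) :=
  euler_char_pCosets_quotient_normal_pSubgroup_general N hN_norm hN
end

section
/- Let C and D be finite posets, and equip the cartesian product C × D with the product order ((x₁,y₁) ≤ (x₂,y₂) iff x₁ ≤ x₂ and y₁ ≤ y₂). Then χ(C × D) = χ(C)·χ(D). -/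
section

open Finset
open scoped Classical

variable {P : Type*} [PartialOrder P]

theorem IsChain.exists_isLeast_of_finite {s : Set P} (hc : IsChain (· ≤ ·) s) (hs : s.Finite)
    (hne : s.Nonempty) : ∃ x, IsLeast s x := by
  obtain ⟨x, hx⟩ := hs.exists_minimal hne
  exact ⟨x, (show IsChain (· ≥ ·) s from hc.symm).directedOn.minimal_iff_isLeast.mp hx⟩

theorem sum_filter_nonempty_isChain_of_isLeast (S : Finset P) {x : P}
    (hx : IsLeast (S : Set P) x) :
    ∑ t ∈ S.powerset.filter (fun t : Finset P => t.Nonempty ∧ IsChain (· ≤ ·) (t : Set P)),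
      (-1 : ℤ) ^ (t.card + 1) = 1 := by
  have hxS : S = insert x (S.erase x) := (insert_erase hx.1).symm
  have hchain : ∀ t ∈ (S.erase x).powerset,
      IsChain (· ≤ ·) ((insert x t : Finset P) : Set P) ↔ IsChain (· ≤ ·) (t : Set P) := by
    intro t ht
    rw [coe_insert]
    refine ⟨fun h => h.mono (Set.subset_insert _ _), fun h => h.insert fun y hy _ => Or.inl ?_⟩
    exact hx.2 (mem_of_mem_erase (mem_powerset.mp ht hy))
  rw [sum_filter, hxS, sum_powerset_insert (notMem_erase x S), ← sum_add_distrib]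
  have hterm : ∀ t ∈ (S.erase x).powerset,
      ((if t.Nonempty ∧ IsChain (· ≤ ·) (t : Set P) then (-1 : ℤ) ^ (t.card + 1) else 0) +
        if (insert x t).Nonempty ∧ IsChain (· ≤ ·) ((insert x t : Finset P) : Set P) then
          (-1 : ℤ) ^ ((insert x t).card + 1) else 0) = if t = ∅ then 1 else 0 := by
    intro t ht
    have hxt : x ∉ t := fun h => notMem_erase x S (mem_powerset.mp ht h)
    rw [hchain t ht, card_insert_of_notMem hxt]
    rcases t.eq_empty_or_nonempty with rfl | hne
    · simp
    · by_cases hc : IsChain (· ≤ ·) (t : Set P) <;> simp [hc, hne, hne.ne_empty, pow_succ]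
  rw [sum_congr rfl hterm, sum_ite_eq', if_pos (empty_mem_powerset _)]

variable [Fintype P]

theorem sum_filter_nonempty_isChain_eq_sum_isLeast {M : Type*} [AddCommMonoid M]
    (𝒜 : Finset (Finset P)) (g : Finset P → M) :
    ∑ s ∈ 𝒜.filter fun s : Finset P => s.Nonempty ∧ IsChain (· ≤ ·) (s : Set P), g s =
      ∑ x, ∑ s ∈ 𝒜.filter fun s : Finset P =>
        IsChain (· ≤ ·) (s : Set P) ∧ IsLeast (s : Set P) x, g s := by
  simp only [sum_filter]
  rw [sum_comm]
  refine sum_congr rfl fun s _ => ?_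
  by_cases hs : s.Nonempty ∧ IsChain (· ≤ ·) (s : Set P)
  · obtain ⟨x₀, hx₀⟩ := hs.2.exists_isLeast_of_finite s.finite_toSet hs.1
    have hleast : ∀ x, IsLeast (s : Set P) x ↔ x = x₀ :=
      fun x => ⟨fun hx => hx.unique hx₀, (· ▸ hx₀)⟩
    simp [hs, hleast]
  · rw [if_neg hs]
    refine (sum_eq_zero fun x _ => if_neg ?_).symm
    exact fun ⟨hc, hx⟩ => hs ⟨⟨x, hx.1⟩, hc⟩

noncomputable def leastChainSum (x : P) : ℤ :=
  ∑ s ∈ univ.filter (fun s : Finset P => IsChain (· ≤ ·) (s : Set P) ∧ IsLeast (s : Set P) x),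
    (-1) ^ (s.card + 1)

theorem sum_leastChainSum : ∑ x : P, leastChainSum x = posetEulerChar P := by
  rw [posetEulerChar, Subsingleton.elim (Fintype.ofFinite P) ‹_›, ← sum_filter,
    sum_filter_nonempty_isChain_eq_sum_isLeast, powerset_univ]
  rfl

theorem sum_le_leastChainSum (x : P) : ∑ y ∈ univ.filter (x ≤ ·), leastChainSum y = 1 := by
  set S := univ.filter (x ≤ ·)
  have hS : IsLeast (S : Set P) x := ⟨by simp [S], fun y hy => by simpa [S] using hy⟩
  have hrestrict : ∀ y, (if x ≤ y then leastChainSum y else 0) =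
      ∑ s ∈ S.powerset.filter (fun s : Finset P =>
        IsChain (· ≤ ·) (s : Set P) ∧ IsLeast (s : Set P) y), (-1) ^ (s.card + 1) := by
    intro y
    split_ifs with hxy
    · refine sum_congr ?_ fun _ _ => rfl
      ext s
      simp only [mem_filter, mem_univ, true_and, mem_powerset]
      refine (and_iff_right_of_imp fun h z hz => ?_).symm
      simpa [S] using hxy.trans (h.2.2 hz)
    · refine (sum_eq_zero fun s hs => absurd ?_ hxy).symm
      obtain ⟨hsS, -, hy⟩ := mem_filter.mp hs
      simpa [S] using mem_powerset.mp hsS hy.1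
  rw [sum_filter, sum_congr rfl fun y _ => hrestrict y, ← sum_filter_nonempty_isChain_eq_sum_isLeast,
    sum_filter_nonempty_isChain_of_isLeast S hS]

theorem eq_of_forall_sum_le_eq {M : Type*} [AddCommGroup M] {v w : P → M}
    (h : ∀ x, ∑ y ∈ univ.filter (x ≤ ·), v y = ∑ y ∈ univ.filter (x ≤ ·), w y) : v = w := by
  have hsplit : ∀ (u : P → M) x, ∑ y ∈ univ.filter (x ≤ ·), u y =
      u x + ∑ y ∈ univ.filter (x < ·), u y := by
    intro u x
    rw [← sum_insert (by simp)]
    congr 1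
    ext y
    simp [le_iff_eq_or_lt, eq_comm]
  funext x
  induction x using WellFoundedGT.induction with
  | _ x ih =>
    have := h x
    rw [hsplit, hsplit, sum_congr rfl fun y hy => ih y (mem_filter.mp hy).2] at this
    exact add_right_cancel this

theorem sum_prod_le_mul {Q : Type*} [PartialOrder Q] [Fintype Q] {R : Type*} [CommSemiring R]
    (f : P → R) (g : Q → R) (p : P × Q) :
    ∑ q ∈ univ.filter (p ≤ ·), f q.1 * g q.2 =
      (∑ x ∈ univ.filter (p.1 ≤ ·), f x) * ∑ y ∈ univ.filter (p.2 ≤ ·), g y := by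
  rw [sum_mul_sum, ← sum_product', ← filter_product, ← univ_product_univ]
  rfl

end

/-- For finite posets `C` and `D` with the product order on `C × D`,
`χ(C × D) = χ(C) · χ(D)`. -/
theorem euler_char_prod {C D : Type*} [PartialOrder C] [PartialOrder D]
    [Finite C] [Finite D] :
    posetEulerChar (C × D) = posetEulerChar C * posetEulerChar D := by
  have := Fintype.ofFinite C
  have := Fintype.ofFinite D
  have hprod : leastChainSum = fun p : C × D => leastChainSum p.1 * leastChainSum p.2 :=
    eq_of_forall_sum_le_eq fun p => by
      have hmul := sum_prod_le_mul leastChainSum leastChainSum p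
      rw [sum_le_leastChainSum, sum_le_leastChainSum, one_mul] at hmul
      rw [sum_le_leastChainSum]
      -- the two sides differ only in the `Decidable` instance used by the filter
      convert hmul.symm
  rw [← sum_leastChainSum, ← sum_leastChainSum, ← sum_leastChainSum, hprod, Fintype.sum_prod_type,
    Finset.sum_mul_sum]
end
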